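/- arXiv:2512.11618 — 7 statements merged into one kernel-verified Lean document; each statement's English description precedes it below -/
import Mathlib

section
/- Let A = a_1, ..., a_n be a sequence of integers with sum equal to -1. Then all n cyclic rotations of A are pairwise distinct sequences. -/
/-!
Index the sequence by `ZMod n`. If the rotations by `r` and `s` agree, the sequence is periodic
with period `s - r`, hence constant on the cosets of the subgroup generated by `s - r`. Every
coset has `addOrderOf (s - r)` elements, so this order divides the sum `-1`; thus it is `1` and
`s = r` in `ZMod n`.
-/

open Finset

theorem Function.Periodic.addOrderOf_dvd_sum {G R : Type*} [AddGroup G] [Fintype G] [Semiring R]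
    {f : G → R} {c : G} (hf : Periodic f c) : (addOrderOf c : R) ∣ ∑ x, f x := by
  classical
  set H := AddSubgroup.zmultiples c
  have hbij : Function.Bijective fun p : (G ⧸ H) × H => p.1.out + p.2 := by
    have hmk (p : (G ⧸ H) × H) : ((p.1.out + p.2 : G) : G ⧸ H) = p.1 := by
      rw [QuotientAddGroup.mk_add_of_mem _ p.2.2, QuotientAddGroup.out_eq']
    refine ⟨fun p p' hpp' => ?_, fun x => ?_⟩
    · have hq : p.1 = p'.1 := by rw [← hmk p, ← hmk p']; exact congrArg _ hpp'
      simp only [hq, add_right_inj] at hpp'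
      exact Prod.ext hq (Subtype.ext hpp')
    · have hx : -(x : G ⧸ H).out + x ∈ H :=
        QuotientAddGroup.eq.mp (QuotientAddGroup.out_eq' (x : G ⧸ H))
      exact ⟨(x, ⟨_, hx⟩), add_neg_cancel_left _ _⟩
  have hconst (q : G ⧸ H) (h : H) : f (q.out + h) = f q.out := by
    obtain ⟨k, hk⟩ := AddSubgroup.mem_zmultiples_iff.mp h.2
    rw [← hk, hf.zsmul k]
  rw [← Fintype.sum_bijective _ hbij _ _ fun _ => rfl, Fintype.sum_prod_type]
  simp only [hconst, sum_const, card_univ, Fintype.card_eq_nat_card, H, Nat.card_zmultiples,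
    nsmul_eq_mul]
  exact dvd_sum fun _ _ => dvd_mul_right _ _

theorem Function.Periodic.eq_zero_of_isUnit_sum {G : Type*} [AddGroup G] [Fintype G]
    {f : G → ℤ} {c : G} (hf : Periodic f c) (hsum : IsUnit (∑ x, f x)) : c = 0 := by
  have hunit : IsUnit (addOrderOf c : ℤ) := isUnit_of_dvd_unit hf.addOrderOf_dvd_sum hsum
  rwa [Int.ofNat_isUnit, Nat.isUnit_iff, AddMonoid.addOrderOf_eq_one_iff] at hunit

theorem ZMod.sum_comp_val {M : Type*} [AddCommMonoid M] {n : ℕ} [NeZero n] (a : ℕ → M) :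
    ∑ x : ZMod n, a x.val = ∑ i ∈ range n, a i := by
  obtain ⟨k, rfl⟩ := Nat.exists_eq_succ_of_ne_zero (NeZero.ne n)
  exact Fin.sum_univ_eq_sum_range a (k + 1)

theorem cyclic_rotations_distinct_general (n : ℕ) (a : ℕ → ℤ)
    (hsum : ∑ i ∈ Finset.range n, a i = -1)
    (r s : ℕ) (hr : r < n) (hs : s < n)
    (h : ∀ i < n, a ((i + r) % n) = a ((i + s) % n)) :
    r = s := by
  have : NeZero n := ⟨by omega⟩
  set b : ZMod n → ℤ := fun x => a x.val
  have hrot (y : ZMod n) : b (y + r) = b (y + s) := by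
    simpa [b, ZMod.val_add, ZMod.val_natCast] using h y.val y.val_lt
  have hper : Function.Periodic b ((s : ZMod n) - r) := fun x => by
    rw [show x + (s - r : ZMod n) = x - r + s by abel, ← hrot, sub_add_cancel]
  have hrs : (s : ZMod n) - r = 0 :=
    hper.eq_zero_of_isUnit_sum (by rw [ZMod.sum_comp_val, hsum]; exact isUnit_one.neg)
  rw [← ZMod.val_natCast_of_lt hr, ← ZMod.val_natCast_of_lt hs, sub_eq_zero.mp hrs]

/-- Let `A = a_1, ..., a_n` be a sequence of integers with sum `-1`.
Then all `n` cyclic rotations of `A` are pairwise distinct sequences.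
We index the sequence by `0, ..., n-1`; the rotation by `r` is `i ↦ a ((i + r) % n)`. -/
theorem cyclic_rotations_distinct (n : ℕ) (hn : 1 ≤ n) (a : ℕ → ℤ)
    (hsum : ∑ i ∈ Finset.range n, a i = -1)
    (r s : ℕ) (hr : r < n) (hs : s < n)
    (h : ∀ i < n, a ((i + r) % n) = a ((i + s) % n)) :
    r = s :=
  cyclic_rotations_distinct_general n a hsum r s hr hs h
end

section
/- Let A = a_1, ..., a_n be a sequence of integers with sum equal to -1. Then there exists exactly one cyclic rotation A' = a_1', ..., a_n' of A such that all proper prefix sums are nonnegative, i.e., for every j with 1 ≤ j ≤ n-1 it holds that a_1' + ... + a_j' ≥ 0. -/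
/-! Let `S k` be the `k`-th prefix sum of the periodic extension of `a`; rotating by `r` turns
the prefix sums into the increments `S (r + j) - S r`, and `S (n + k) = S k - 1`. A rotation is
therefore good exactly when `r` is the first position in `[0, n)` where `S` attains its minimum
there: later positions must not go below `S r`, and earlier ones, which reappear one period
later lowered by `1`, must lie strictly above it. The first minimum exists and is unique. -/

open Finset

section FirstMin

variable {α : Type*} [LinearOrder α]

def IsFirstMin (n : ℕ) (S : ℕ → α) (r : ℕ) : Prop :=
  r < n ∧ (∀ l < n, S r ≤ S l) ∧ ∀ l < r, S r < S l

theorem existsUnique_isFirstMin {n : ℕ} (hn : 0 < n) (S : ℕ → α) :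
    ∃! r, IsFirstMin n S r := by
  classical
  have hmin : ∃ k, k < n ∧ ∀ l < n, S k ≤ S l := by
    obtain ⟨k, hk, hkmin⟩ := (range n).exists_min_image S ⟨0, mem_range.mpr hn⟩
    exact ⟨k, mem_range.mp hk, fun l hl => hkmin l (mem_range.mpr hl)⟩
  have hfirst : IsFirstMin n S (Nat.find hmin) := by
    obtain ⟨hrn, hrmin⟩ := Nat.find_spec hmin
    refine ⟨hrn, hrmin, fun l hl => ?_⟩
    obtain ⟨l', hl', hlt⟩ : ∃ l' < n, S l' < S l := by
      simpa using not_and.mp (Nat.find_min hmin hl) (hl.trans hrn)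
    exact (hrmin l' hl').trans_lt hlt
  refine ⟨_, hfirst, fun r hr => ?_⟩
  obtain hlt | heq | hgt := lt_trichotomy r (Nat.find hmin)
  · exact absurd (hr.2.1 _ hfirst.1) (not_le.mpr (hfirst.2.2 r hlt))
  · exact heq
  · exact absurd (hfirst.2.1 r hr.1) (not_le.mpr (hr.2.2 _ hgt))

end FirstMin

section PeriodicPrefixSum

variable {M : Type*}

def periodicPrefixSum [AddCommMonoid M] (n : ℕ) (a : ℕ → M) (k : ℕ) : M :=
  ∑ i ∈ range k, a (i % n)

theorem periodicPrefixSum_period_add [AddCommMonoid M] (n : ℕ) (a : ℕ → M) (k : ℕ) :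
    periodicPrefixSum n a (n + k) = ∑ i ∈ range n, a i + periodicPrefixSum n a k := by
  rw [periodicPrefixSum, sum_range_add]
  congr 1
  · exact sum_congr rfl fun i hi => by rw [Nat.mod_eq_of_lt (mem_range.mp hi)]
  · simp only [periodicPrefixSum, Nat.add_mod_left]

theorem sum_range_rotate_eq_periodicPrefixSum_sub [AddCommGroup M] (n : ℕ) (a : ℕ → M)
    (r j : ℕ) :
    ∑ i ∈ range j, a ((i + r) % n) =
      periodicPrefixSum n a (r + j) - periodicPrefixSum n a r := by
  rw [periodicPrefixSum, periodicPrefixSum, sum_range_add, add_sub_cancel_left]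
  simp only [add_comm r]

end PeriodicPrefixSum

theorem isFirstMin_iff_of_period_add {n : ℕ} {S : ℕ → ℤ} (hS : ∀ k, S (n + k) = S k - 1)
    (r : ℕ) : IsFirstMin n S r ↔ r < n ∧ ∀ j, 1 ≤ j → j ≤ n - 1 → S r ≤ S (r + j) := by
  constructor
  · rintro ⟨hr, hle, hlt⟩
    refine ⟨hr, fun j _ hjn => ?_⟩
    by_cases hwrap : r + j < n
    · exact hle _ hwrap
    · have hshift := hS (r + j - n)
      rw [show n + (r + j - n) = r + j by omega] at hshift
      have := hlt (r + j - n) (by omega)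
      omega
  · rintro ⟨hr, hinc⟩
    have hlt : ∀ l < r, S r < S l := fun l hl => by
      have := hinc (l + n - r) (by omega) (by omega)
      rw [show r + (l + n - r) = n + l by omega, hS] at this
      omega
    refine ⟨hr, fun l hl => ?_, hlt⟩
    obtain hlr | hrl := lt_or_ge l r
    · exact (hlt l hlr).le
    obtain rfl | hrl := hrl.eq_or_lt
    · exact le_rfl
    · simpa [Nat.add_sub_cancel' hrl.le] using hinc (l - r) (by omega) (by omega)

/-- **cycle lemma.** Let `A = a_1, ..., a_n` be a sequence of integers with
sum `-1`. Then there exists exactly one cyclic rotation `A'` of `A` such that all proper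
prefix sums of `A'` are nonnegative.  We index by `0, ..., n-1`; the rotation by `r` is
`i ↦ a ((i + r) % n)`, and its prefix sum of length `j` is `∑ i < j, a ((i + r) % n)`. -/
theorem cycle_lemma (n : ℕ) (hn : 1 ≤ n) (a : ℕ → ℤ)
    (hsum : ∑ i ∈ Finset.range n, a i = -1) :
    ∃! r : ℕ, r < n ∧
      ∀ j : ℕ, 1 ≤ j → j ≤ n - 1 → 0 ≤ ∑ i ∈ Finset.range j, a ((i + r) % n) := by
  have hS (k : ℕ) : periodicPrefixSum n a (n + k) = periodicPrefixSum n a k - 1 := by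
    rw [periodicPrefixSum_period_add, hsum, neg_add_eq_sub]
  refine (existsUnique_congr fun r => ?_).mp (existsUnique_isFirstMin hn (periodicPrefixSum n a))
  simp only [sum_range_rotate_eq_periodicPrefixSum_sub, sub_nonneg]
  exact isFirstMin_iff_of_period_add hS r
end

section
/- Let n ≥ 1 and let (n_c)_{c ∈ Σ} be a family of nonnegative integers indexed by a finite alphabet Σ with Σ_c n_c = n - 1. Then the number of tries (cardinal trees) with n nodes in which each symbol c labels exactly n_c edges equals (1/n) · ∏_{c ∈ Σ} C(n, n_c), where C(n, k) denotes the binomial coefficient. -/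
/-- An ordered edge-labeled rooted tree: each node carries a list of
(label, subtree) pairs, listed in sibling order. -/
inductive LTree (A : Type) : Type where
  | node : List (A × LTree A) → LTree A

/-- A labeled ordered tree is a trie if at every node the labels of the outgoing
edges are strictly increasing in the alphabet order (hence pairwise distinct and
siblings are sorted by their incoming label). -/
inductive LTree.IsTrie {A : Type} [LT A] : LTree A → Prop where
  | node (cs : List (A × LTree A))
      (hsort : (cs.map Prod.fst).Chain' (· < ·))
      (hsub : ∀ p ∈ cs, IsTrie p.2) :
      IsTrie (.node cs)

/-- Number of nodes of a labeled ordered tree. -/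
def LTree.size {A : Type} : LTree A → ℕ
  | .node cs => 1 + (cs.attach.map (fun p => p.1.2.size)).sum
decreasing_by
  have h := List.sizeOf_lt_of_mem p.2
  obtain ⟨⟨a, t⟩, hp⟩ := p
  simp at h ⊢
  omega

/-- Number of edges carrying the label `c`. -/
def LTree.labelCount {A : Type} [DecidableEq A] (c : A) : LTree A → ℕ
  | .node cs =>
      (cs.attach.map (fun p => (if p.1.1 = c then 1 else 0) + p.1.2.labelCount c)).sum
decreasing_by
  have h := List.sizeOf_lt_of_mem p.2
  obtain ⟨⟨a, t⟩, hp⟩ := p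
  simp at h ⊢
  omega


/-!
Encode a trie by the sets of outgoing labels of its nodes, listed in preorder. Reading the
cardinalities of these sets as arities, the codes of tries are exactly the words of finite
subsets of `Σ` satisfying the Łukasiewicz prefix condition, so tries with `n` nodes and letter
counts `(n_c)` correspond to such words of length `n` in which `c` lies in exactly `n_c` sets.
By the cycle lemma, among the `n` rotations of any word of `n` sets of total size `n - 1`
exactly one satisfies the prefix condition, and rotations preserve the letter counts. Finally a
word of length `n` is determined by the positions at which each letter occurs, which gives the
product of binomial coefficients.
-/

open scoped Finset

/-- `a` is the preorder sequence of arities of a forest of `k` plane trees. -/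
def IsLukasiewicz (k : ℕ) (a : List ℕ) : Prop :=
  (∀ j < a.length, j < k + (a.take j).sum) ∧ k + a.sum = a.length

theorem isLukasiewicz_nil_iff {k : ℕ} : IsLukasiewicz k [] ↔ k = 0 := by
  simp [IsLukasiewicz]

theorem not_isLukasiewicz_zero_cons (m : ℕ) (a : List ℕ) : ¬ IsLukasiewicz 0 (m :: a) :=
  fun h => by simpa using h.1 0

theorem isLukasiewicz_succ_cons_iff {k m : ℕ} {a : List ℕ} :
    IsLukasiewicz (k + 1) (m :: a) ↔ IsLukasiewicz (m + k) a := by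
  simp only [IsLukasiewicz, List.length_cons, List.sum_cons]
  constructor
  · rintro ⟨hpre, hsum⟩
    refine ⟨fun j hj => ?_, by omega⟩
    have := hpre (j + 1) (by omega)
    simp only [List.take_succ_cons, List.sum_cons] at this
    omega
  · rintro ⟨hpre, hsum⟩
    refine ⟨fun j hj => ?_, by omega⟩
    cases j with
    | zero => simp
    | succ j =>
      have := hpre j (by omega)
      simp only [List.take_succ_cons, List.sum_cons]
      omega

theorem existsUnique_forall_le_add {n : ℕ} (hn : 0 < n) {f : ℕ → ℤ}
    (hf : ∀ j < n, f (n + j) = f j - 1) : ∃! i : Fin n, ∀ j < n, f i ≤ f (i + j) := by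
  have at_most_one : ∀ a b, a < b → b < n → (∀ j < n, f a ≤ f (a + j)) →
      (∀ j < n, f b ≤ f (b + j)) → False := by
    intro a b hab hbn ha hb
    have h1 := ha (b - a) (by omega)
    have h2 := hb (n + a - b) (by omega)
    rw [Nat.add_sub_cancel' hab.le] at h1
    rw [Nat.add_sub_cancel' (by omega), hf a (by omega)] at h2
    omega
  have hne : (Finset.range n).Nonempty := Finset.nonempty_range_iff.mpr hn.ne'
  set m := (Finset.range n).inf' hne f
  have hm : ∀ j < n, m ≤ f j := fun j hj => Finset.inf'_le f (Finset.mem_range.mpr hj)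
  have hex : ∃ i, i < n ∧ f i = m := by
    obtain ⟨i, hi, hfi⟩ := Finset.exists_mem_eq_inf' hne f
    exact ⟨i, Finset.mem_range.mp hi, hfi.symm⟩
  obtain ⟨i₀, ⟨hi₀, hfi₀⟩, hfirst⟩ :
      ∃ i, (i < n ∧ f i = m) ∧ ∀ r < i, ¬ (r < n ∧ f r = m) :=
    ⟨Nat.find hex, Nat.find_spec hex, fun _ => Nat.find_min hex⟩
  have hgood : ∀ j < n, f i₀ ≤ f (i₀ + j) := by
    intro j hj
    by_cases hjn : i₀ + j < n
    · exact hfi₀ ▸ hm _ hjn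
    · -- past the period, `f` is one below a value that strictly exceeds the first minimum
      have hr : i₀ + j - n < i₀ := by omega
      have := lt_of_le_of_ne (hm _ (by omega)) fun h => hfirst _ hr ⟨by omega, h.symm⟩
      rw [show i₀ + j = n + (i₀ + j - n) by omega, hf _ (by omega)]
      omega
  refine ⟨⟨i₀, hi₀⟩, hgood, fun i hi => Fin.ext (by_contra fun hne => ?_)⟩
  rcases Nat.lt_or_gt_of_ne hne with h | h
  · exact at_most_one _ _ h hi₀ hi hgood
  · exact at_most_one _ _ h i.2 hgood hi

/-- Height after `j` steps of the walk with steps `a_i - 1`, run twice around `a`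
(meaningful for `j ≤ 2 * a.length`). -/
def lukasiewiczPath (a : List ℕ) (j : ℕ) : ℤ := ((a ++ a).take j).sum - j

theorem lukasiewiczPath_length_add {a : List ℕ} (hsum : a.sum + 1 = a.length) {j : ℕ}
    (hj : j ≤ a.length) : lukasiewiczPath a (a.length + j) = lukasiewiczPath a j - 1 := by
  simp only [lukasiewiczPath, List.take_length_add_append, List.sum_append,
    List.take_append_of_le_length hj]
  omega

theorem sum_take_append_self_add {a : List ℕ} {i : ℕ} (hi : i ≤ a.length) {j : ℕ}
    (hj : j ≤ a.length) :
    ((a ++ a).take (i + j)).sum = ((a ++ a).take i).sum + ((a.rotate i).take j).sum := by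
  have hdrop : (a ++ a).drop i = a.rotate i ++ a.drop i := by
    rw [List.rotate_eq_drop_append_take hi, List.drop_append_of_le_length hi, List.append_assoc,
      List.take_append_drop]
  rw [List.take_add, List.sum_append, hdrop,
    List.take_append_of_le_length (l₁ := a.rotate i) (by rwa [List.length_rotate])]

theorem isLukasiewicz_rotate_iff {a : List ℕ} (hsum : a.sum + 1 = a.length) {i : ℕ}
    (hi : i ≤ a.length) :
    IsLukasiewicz 1 (a.rotate i) ↔
      ∀ j < a.length, lukasiewiczPath a i ≤ lukasiewiczPath a (i + j) := by
  have hrot : (a.rotate i).sum = a.sum := (List.rotate_perm a i).sum_eq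
  simp only [IsLukasiewicz, List.length_rotate, hrot, lukasiewiczPath]
  refine ⟨fun h j hj => ?_, fun h => ⟨fun j hj => ?_, by omega⟩⟩
  · have := h.1 j hj
    rw [sum_take_append_self_add hi hj.le]
    omega
  · have := h j hj
    rw [sum_take_append_self_add hi hj.le] at this
    omega

theorem existsUnique_isLukasiewicz_rotate {a : List ℕ} (hsum : a.sum + 1 = a.length) :
    ∃! i : Fin a.length, IsLukasiewicz 1 (a.rotate i) :=
  (existsUnique_congr fun i => isLukasiewicz_rotate_iff hsum i.2.le).mpr <|
    existsUnique_forall_le_add (by omega) fun j hj => lukasiewiczPath_length_add hsum hj.le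

namespace LTree

variable {A : Type}

theorem size_node (cs : List (A × LTree A)) :
    size (node cs) = 1 + (cs.map fun p => p.2.size).sum := by
  rw [size]
  exact congrArg (1 + List.sum ·) (List.attach_map_val (l := cs) (f := fun p => p.2.size))

theorem labelCount_node [DecidableEq A] (c : A) (cs : List (A × LTree A)) :
    labelCount c (node cs) =
      (cs.map fun p => (if p.1 = c then 1 else 0) + labelCount c p.2).sum := by
  rw [labelCount]
  exact congrArg List.sum
    (List.attach_map_val (l := cs) (f := fun p => (if p.1 = c then 1 else 0) + labelCount c p.2))

theorem isTrie_node_iff [Preorder A] {cs : List (A × LTree A)} :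
    IsTrie (node cs) ↔ (cs.map Prod.fst).SortedLT ∧ ∀ p ∈ cs, IsTrie p.2 :=
  ⟨fun ⟨_, hsort, hsub⟩ => ⟨List.sortedLT_iff_isChain.mpr hsort, hsub⟩,
    fun h => .node cs (List.sortedLT_iff_isChain.mp h.1) h.2⟩

theorem forall_isTrie_map_snd_append [LT A] {cs : List (A × LTree A)} {ts : List (LTree A)}
    (hcs : ∀ p ∈ cs, IsTrie p.2) (hts : ∀ t ∈ ts, IsTrie t) :
    ∀ t ∈ cs.map Prod.snd ++ ts, IsTrie t := by
  intro t ht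
  rcases List.mem_append.mp ht with ht | ht
  · obtain ⟨p, hp, rfl⟩ := List.mem_map.mp ht
    exact hcs p hp
  · exact hts t ht

theorem sum_map_size_map_snd_append_lt (cs : List (A × LTree A)) (ts : List (LTree A)) :
    ((cs.map Prod.snd ++ ts).map size).sum < ((node cs :: ts).map size).sum := by
  simp only [List.map_cons, List.sum_cons, size_node, List.map_append, List.sum_append,
    List.map_map, Function.comp_def]
  omega

theorem forest_induction {motive : List (LTree A) → Prop} (nil : motive [])
    (cons : ∀ cs ts, motive (cs.map Prod.snd ++ ts) → motive (node cs :: ts)) :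
    ∀ ts, motive ts
  | [] => nil
  | node cs :: ts => cons cs ts (forest_induction nil cons (cs.map Prod.snd ++ ts))
termination_by ts => (ts.map size).sum
decreasing_by exact sum_map_size_map_snd_append_lt cs ts

/-- The sets of outgoing labels of the nodes of a forest, listed in preorder. -/
def forestCode [DecidableEq A] : List (LTree A) → List (Finset A)
  | [] => []
  | node cs :: ts => (cs.map Prod.fst).toFinset :: forestCode (cs.map Prod.snd ++ ts)
termination_by ts => (ts.map size).sum
decreasing_by
  convert sum_map_size_map_snd_append_lt cs ts using 5
  exact List.attach_map_val

section DecidableEq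

variable [DecidableEq A]

@[simp]
theorem forestCode_nil : forestCode ([] : List (LTree A)) = [] := by
  rw [forestCode]

@[simp]
theorem forestCode_node_cons (cs : List (A × LTree A)) (ts : List (LTree A)) :
    forestCode (node cs :: ts) =
      (cs.map Prod.fst).toFinset :: forestCode (cs.map Prod.snd ++ ts) := by
  rw [forestCode]

theorem length_forestCode (ts : List (LTree A)) :
    (forestCode ts).length = (ts.map size).sum := by
  induction ts using forest_induction with
  | nil => simp
  | cons cs ts ih => simp [ih, size_node, Function.comp_def]; omega

end DecidableEq

section Preorder

variable [Preorder A] [DecidableEq A]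

theorem card_toFinset_map_fst {cs : List (A × LTree A)} (h : (cs.map Prod.fst).SortedLT) :
    (cs.map Prod.fst).toFinset.card = cs.length := by
  rw [List.toFinset_card_of_nodup h.nodup, List.length_map]

theorem isLukasiewicz_forestCode {ts : List (LTree A)} (h : ∀ t ∈ ts, IsTrie t) :
    IsLukasiewicz ts.length ((forestCode ts).map Finset.card) := by
  induction ts using forest_induction with
  | nil => simp [isLukasiewicz_nil_iff]
  | cons cs ts ih =>
    simp only [List.forall_mem_cons, isTrie_node_iff] at h
    obtain ⟨⟨hsort, hcs⟩, hts⟩ := h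
    rw [forestCode_node_cons, List.map_cons, List.length_cons, isLukasiewicz_succ_cons_iff,
      card_toFinset_map_fst hsort]
    simpa using ih (forall_isTrie_map_snd_append hcs hts)

theorem countP_forestCode (c : A) {ts : List (LTree A)} (h : ∀ t ∈ ts, IsTrie t) :
    (forestCode ts).countP (c ∈ ·) = (ts.map (labelCount c)).sum := by
  induction ts using forest_induction with
  | nil => simp
  | cons cs ts ih =>
    simp only [List.forall_mem_cons, isTrie_node_iff] at h
    obtain ⟨⟨hsort, hcs⟩, hts⟩ := h
    have hlabel : (cs.map fun p => if p.1 = c then 1 else 0).sum =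
        if c ∈ (cs.map Prod.fst).toFinset then 1 else 0 := by
      rw [← Finset.sum_ite_eq' _ c (fun _ => 1), List.sum_toFinset _ hsort.nodup, List.map_map]
      rfl
    rw [forestCode_node_cons, List.countP_cons, ih (forall_isTrie_map_snd_append hcs hts)]
    simp only [List.map_append, List.sum_append, List.map_cons, List.sum_cons, labelCount_node,
      List.sum_map_add, hlabel, List.map_map, Function.comp_def, decide_eq_true_eq]
    omega

end Preorder

theorem eq_of_forestCode_eq [PartialOrder A] [DecidableEq A] {ts ts' : List (LTree A)}
    (h : ∀ t ∈ ts, IsTrie t) (h' : ∀ t ∈ ts', IsTrie t)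
    (heq : forestCode ts = forestCode ts') : ts = ts' := by
  induction ts using forest_induction generalizing ts' with
  | nil =>
    obtain _ | ⟨⟨cs'⟩, ts'⟩ := ts'
    · rfl
    · simp at heq
  | cons cs ts ih =>
    obtain _ | ⟨⟨cs'⟩, ts'⟩ := ts'
    · simp at heq
    simp only [List.forall_mem_cons, isTrie_node_iff] at h h'
    obtain ⟨⟨hsort, hcs⟩, hts⟩ := h
    obtain ⟨⟨hsort', hcs'⟩, hts'⟩ := h'
    rw [forestCode_node_cons, forestCode_node_cons, List.cons.injEq] at heq
    obtain ⟨hlabels, hrest⟩ := heq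
    have hfst : cs.map Prod.fst = cs'.map Prod.fst :=
      hsort.eq_of_mem_iff hsort' fun a => by rw [← List.mem_toFinset, hlabels, List.mem_toFinset]
    have hlen : (cs.map Prod.snd).length = (cs'.map Prod.snd).length := by
      simpa using congrArg List.length hfst
    obtain ⟨hsnd, rfl⟩ := List.append_inj (ih (forall_isTrie_map_snd_append hcs hts)
      (forall_isTrie_map_snd_append hcs' hts') hrest) hlen
    rw [← List.zip_unzip cs, ← List.zip_unzip cs', List.unzip_fst, List.unzip_snd,
      List.unzip_fst, List.unzip_snd, hfst, hsnd]

variable [LinearOrder A]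

theorem exists_forestCode_eq {w : List (Finset A)} {k : ℕ}
    (hw : IsLukasiewicz k (w.map Finset.card)) :
    ∃ ts : List (LTree A), ts.length = k ∧ (∀ t ∈ ts, IsTrie t) ∧ forestCode ts = w := by
  induction w generalizing k with
  | nil =>
    rw [List.map_nil, isLukasiewicz_nil_iff] at hw
    exact ⟨[], hw.symm, by simp, by simp⟩
  | cons s w ih =>
    obtain _ | k := k
    · exact absurd hw (not_isLukasiewicz_zero_cons _ _)
    rw [List.map_cons, isLukasiewicz_succ_cons_iff] at hw
    obtain ⟨ts, hlen, htrie, hcode⟩ := ih hw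
    have hsl : s.sort.length = (ts.take s.card).length := by simp; omega
    have hfst := List.map_fst_zip hsl.le
    have hsnd := List.map_snd_zip hsl.ge
    refine ⟨node (s.sort.zip (ts.take s.card)) :: ts.drop s.card, by simp; omega, ?_, ?_⟩
    · simp only [List.forall_mem_cons, isTrie_node_iff, hfst]
      exact ⟨⟨Finset.sortedLT_sort s,
        fun p hp => htrie _ (List.take_subset _ _ (List.of_mem_zip hp).2)⟩,
        fun t ht => htrie t (List.drop_subset _ _ ht)⟩
    · rw [forestCode_node_cons, hfst, hsnd, List.take_append_drop, hcode, Finset.sort_toFinset]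

theorem card_tries_eq_card_isLukasiewicz (n : ℕ) (m : A → ℕ) :
    Nat.card {T : LTree A // T.IsTrie ∧ T.size = n ∧ ∀ c, T.labelCount c = m c} =
      Nat.card {w : List (Finset A) // IsLukasiewicz 1 (w.map Finset.card) ∧
        w.length = n ∧ ∀ c, w.countP (c ∈ ·) = m c} := by
  let code (T : {T : LTree A // T.IsTrie ∧ T.size = n ∧ ∀ c, T.labelCount c = m c}) :
      {w : List (Finset A) // IsLukasiewicz 1 (w.map Finset.card) ∧
        w.length = n ∧ ∀ c, w.countP (c ∈ ·) = m c} :=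
    have hT := List.forall_mem_singleton.mpr T.2.1
    ⟨forestCode [T.1], isLukasiewicz_forestCode hT, by simpa [length_forestCode] using T.2.2.1,
      fun c => by simpa [countP_forestCode c hT] using T.2.2.2 c⟩
  refine Nat.card_congr (Equiv.ofBijective code ⟨fun T T' h => Subtype.ext ?_, fun w => ?_⟩)
  · exact List.singleton_inj.mp <| eq_of_forestCode_eq (List.forall_mem_singleton.mpr T.2.1)
      (List.forall_mem_singleton.mpr T'.2.1) (congrArg Subtype.val h)
  · obtain ⟨w, hw, hlen, hcount⟩ := w
    obtain ⟨ts, hts, htrie, rfl⟩ := exists_forestCode_eq hw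
    obtain ⟨T, rfl⟩ := List.length_eq_one_iff.mp hts
    refine ⟨⟨T, htrie T (by simp), by simpa [length_forestCode] using hlen,
      fun c => by simpa [countP_forestCode c htrie] using hcount c⟩, rfl⟩

end LTree

theorem card_mul_eq_card_of_existsUnique_rotate {α : Type*} {n : ℕ} {P Q : List α → Prop}
    (hP : ∀ l (i : ℕ), P l → P (l.rotate i))
    (hQ : ∀ l, l.length = n → P l → ∃! i : Fin n, Q (l.rotate i)) :
    Nat.card {l // Q l ∧ l.length = n ∧ P l} * n = Nat.card {l // l.length = n ∧ P l} := by
  have rotate_sub_add (l : List α) (hl : l.length = n) (i : Fin n) :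
      (l.rotate (n - i)).rotate i = l := by
    rw [List.rotate_rotate, Nat.sub_add_cancel i.2.le, ← hl, List.rotate_length]
  let unrotate (p : {l // Q l ∧ l.length = n ∧ P l} × Fin n) : {l // l.length = n ∧ P l} :=
    ⟨p.1.1.rotate (n - p.2), by rw [List.length_rotate, p.1.2.2.1], hP _ _ p.1.2.2.2⟩
  have hbij : Function.Bijective unrotate := by
    constructor
    · rintro ⟨⟨l, hQl, hl, hPl⟩, i⟩ ⟨⟨l', hQl', hl', hPl'⟩, i'⟩ h
      have h : l.rotate (n - i) = l'.rotate (n - i') := congrArg Subtype.val h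
      obtain rfl : i = i' :=
        (hQ (l.rotate (n - i)) (by rw [List.length_rotate, hl]) (hP _ _ hPl)).unique
          (by rwa [rotate_sub_add l hl]) (by rwa [h, rotate_sub_add l' hl'])
      obtain rfl : l = l' := List.rotate_injective (n - i) h
      rfl
    · rintro ⟨l, hl, hPl⟩
      obtain ⟨i, hi, -⟩ := hQ l hl hPl
      refine ⟨(⟨l.rotate i, hi, by rw [List.length_rotate, hl], hP _ _ hPl⟩, i), Subtype.ext ?_⟩
      change (l.rotate i).rotate (n - i) = l
      rw [List.rotate_rotate, Nat.add_sub_cancel' i.2.le, ← hl, List.rotate_length]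
  rw [← Nat.card_congr (Equiv.ofBijective unrotate hbij), Nat.card_prod, Nat.card_fin]

theorem List.countP_ofFn {α : Type*} {n : ℕ} (p : α → Bool) (f : Fin n → α) :
    (List.ofFn f).countP p = #{i | p (f i)} := by
  induction n with
  | zero => simp
  | succ n ih => rw [List.ofFn_succ, List.countP_cons, ih, Fin.card_filter_univ_succ', add_comm]

section Words

variable {A : Type*} [Fintype A] [DecidableEq A]

theorem sum_map_card_eq_sum_countP_mem (w : List (Finset A)) :
    (w.map Finset.card).sum = ∑ c, w.countP (c ∈ ·) := by
  induction w with
  | nil => simp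
  | cons s w ih => simp [List.countP_cons, Finset.sum_add_distrib, ih, add_comm]

variable (A) in
def wordOfPositions (n : ℕ) : (A → Finset (Fin n)) ≃ {w : List (Finset A) // w.length = n} where
  toFun s := ⟨List.ofFn fun i => ({c | i ∈ s c} : Finset A), List.length_ofFn⟩
  invFun w c := {i | c ∈ w.1[i.1]'(i.2.trans_eq w.2.symm)}
  left_inv s := by ext c i; simp
  right_inv w := Subtype.ext <| List.ext_getElem (by simp [w.2]) fun i _ _ => by ext c; simp

theorem countP_mem_wordOfPositions {n : ℕ} (s : A → Finset (Fin n)) (c : A) :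
    (wordOfPositions A n s).1.countP (c ∈ ·) = (s c).card := by
  simp [wordOfPositions, List.countP_ofFn]

theorem card_words_countP_mem_eq_prod_choose (n : ℕ) (m : A → ℕ) :
    Nat.card {w : List (Finset A) // w.length = n ∧ ∀ c, w.countP (c ∈ ·) = m c} =
      ∏ c, n.choose (m c) := by
  let e : (∀ c, {s : Finset (Fin n) // s.card = m c}) ≃
      {w : List (Finset A) // w.length = n ∧ ∀ c, w.countP (c ∈ ·) = m c} :=
    (Equiv.subtypePiEquivPi.symm.trans (Equiv.subtypeEquiv (wordOfPositions A n) fun s => by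
      simp only [countP_mem_wordOfPositions])).trans
      (Equiv.subtypeSubtypeEquivSubtypeInter (fun w : List (Finset A) => w.length = n) _)
  rw [← Nat.card_congr e, Nat.card_pi]
  simp [Nat.card_eq_fintype_card, Fintype.card_finset_len]

end Words

/-- For `n ≥ 1` and nonnegative integers `(n_c)_{c ∈ Σ}` with
`∑_c n_c = n - 1`, the number of tries with `n` nodes in which each symbol `c`
labels exactly `n_c` edges equals `(1/n) ∏_{c ∈ Σ} C(n, n_c)`
(stated equivalently with the factor `n` multiplied on the left). -/
theorem count_tries_with_symbol_distribution
    (Sigma : Type) [Fintype Sigma] [LinearOrder Sigma]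
    (n : ℕ) (hn : 1 ≤ n) (nc : Sigma → ℕ)
    (hsum : ∑ c, nc c = n - 1) :
    n * Nat.card {T : LTree Sigma //
        T.IsTrie ∧ T.size = n ∧ ∀ c : Sigma, T.labelCount c = nc c} =
      ∏ c : Sigma, Nat.choose n (nc c) := by
  have hrotate : ∀ w : List (Finset Sigma), w.length = n → (∀ c, w.countP (c ∈ ·) = nc c) →
      ∃! i : Fin n, IsLukasiewicz 1 ((w.rotate i).map Finset.card) := by
    rintro w rfl hcount
    have hcard : (w.map Finset.card).sum + 1 = (w.map Finset.card).length := by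
      rw [sum_map_card_eq_sum_countP_mem, Finset.sum_congr rfl fun c _ => hcount c, hsum,
        List.length_map]
      omega
    have h := existsUnique_isLukasiewicz_rotate hcard
    rw [List.length_map] at h
    simpa only [List.map_rotate] using h
  rw [LTree.card_tries_eq_card_isLukasiewicz, mul_comm,
    card_mul_eq_card_of_existsUnique_rotate
      (fun w i hw c => ((w.rotate_perm i).countP_eq _).trans (hw c)) hrotate,
    card_words_countP_mem_eq_prod_choose]
end

section
/- Let n ≥ 1, let W and Σ be finite sets, and let (n_w)_{w ∈ W} and (n_{w,c})_{w ∈ W, c ∈ Σ} be nonnegative integers with n_{w,c} ≤ n_w. Suppose W' ⊆ W × Σ^+ refines W in the sense: there are integers n'_{w'} , n'_{w',c} with, for every w ∈ W, n_w = Σ over the refinements w' of w of n'_{w'}, and n_{w,c} = Σ over refinements w' of w of n'_{w',c}. Then the refined entropy sum Σ_{w'} Σ_c [ n'_{w',c} log₂(n'_{w'}/n'_{w',c}) + (n'_{w'} - n'_{w',c}) log₂(n'_{w'}/(n'_{w'} - n'_{w',c})) ] is at most the coarse entropy sum Σ_{w} Σ_c [ n_{w,c} log₂(n_w/n_{w,c})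 + (n_w - n_{w,c}) log₂(n_w/(n_w - n_{w,c})) ]. -/
/-!
Up to the factor `1 / log 2`, both summands of `entTerm N Nc` have the shape `a * log (b / a)`
with `0 ≤ a ≤ b`, namely `(a, b) = (Nc, N)` and `(N - Nc, N)`. Merging the refined contexts of a
coarse context adds up the `a`'s and the `b`'s, so by the log-sum inequality
`∑ aᵢ log (bᵢ / aᵢ) ≤ (∑ aᵢ) log ((∑ bᵢ) / (∑ aᵢ))` each coarse term dominates the sum of the
refined terms it replaces.
-/

open Real

/-- The (unnormalized) binary entropy contribution of a context with `N` nodes,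
`Nc` of which have an outgoing edge labeled by the given symbol
(convention `0·log(x/0) = 0`). -/
noncomputable def entTerm (N Nc : ℕ) : ℝ :=
  (Nc : ℝ) * logb 2 ((N : ℝ) / (Nc : ℝ)) +
    ((N : ℝ) - (Nc : ℝ)) * logb 2 ((N : ℝ) / ((N : ℝ) - (Nc : ℝ)))

/-- `log x ≤ x - 1` at `x = b / (a t)`; equality holds at `t = b / a`. -/
lemma mul_log_div_le_mul_log_add_div_sub {a b t : ℝ} (ha : 0 ≤ a) (hab : a ≤ b) (ht : 0 < t) :
    a * log (b / a) ≤ a * log t + b / t - a := by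
  rcases ha.eq_or_lt with rfl | ha
  · simpa using div_nonneg hab ht.le
  have hb : 0 < b := ha.trans_le hab
  have hsplit : log (b / a) = log t + log (b / (a * t)) := by
    rw [← log_mul ht.ne' (by positivity)]
    congr 1
    field_simp
  have hgibbs : log (b / (a * t)) ≤ b / (a * t) - 1 := log_le_sub_one_of_pos (by positivity)
  calc a * log (b / a) = a * log t + a * log (b / (a * t)) := by rw [hsplit, mul_add]
    _ ≤ a * log t + a * (b / (a * t) - 1) := by gcongr
    _ = a * log t + b / t - a := by field_simp; ring

theorem sum_mul_log_div_le_sum_mul_log_div_sum {ι : Type*} (s : Finset ι) (a b : ι → ℝ)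
    (ha : ∀ i ∈ s, 0 ≤ a i) (hab : ∀ i ∈ s, a i ≤ b i) :
    ∑ i ∈ s, a i * log (b i / a i) ≤ (∑ i ∈ s, a i) * log ((∑ i ∈ s, b i) / ∑ i ∈ s, a i) := by
  set A := ∑ i ∈ s, a i
  set B := ∑ i ∈ s, b i
  rcases (Finset.sum_nonneg ha).eq_or_lt with hA | hA
  · have hzero : ∀ i ∈ s, a i = 0 := (Finset.sum_eq_zero_iff_of_nonneg ha).mp hA.symm
    rw [show A = 0 from hA.symm, zero_mul]
    exact (Finset.sum_eq_zero fun i hi => by rw [hzero i hi, zero_mul]).le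
  have hB : 0 < B := hA.trans_le (Finset.sum_le_sum hab)
  calc ∑ i ∈ s, a i * log (b i / a i)
      ≤ ∑ i ∈ s, (a i * log (B / A) + b i / (B / A) - a i) :=
        Finset.sum_le_sum fun i hi =>
          mul_log_div_le_mul_log_add_div_sub (ha i hi) (hab i hi) (div_pos hB hA)
    _ = A * log (B / A) + B / (B / A) - A := by
        rw [Finset.sum_sub_distrib, Finset.sum_add_distrib, ← Finset.sum_mul, ← Finset.sum_div]
    _ = A * log (B / A) := by field_simp; ring

theorem sum_entTerm_le_entTerm_sum {ι : Type*} (s : Finset ι) (N Nc : ι → ℕ)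
    (h : ∀ i ∈ s, Nc i ≤ N i) :
    ∑ i ∈ s, entTerm (N i) (Nc i) ≤ entTerm (∑ i ∈ s, N i) (∑ i ∈ s, Nc i) := by
  have hc := sum_mul_log_div_le_sum_mul_log_div_sum s (fun i => (Nc i : ℝ)) (fun i => (N i : ℝ))
    (fun i _ => Nat.cast_nonneg _) (fun i hi => by exact_mod_cast h i hi)
  have hnc := sum_mul_log_div_le_sum_mul_log_div_sum s (fun i => (N i : ℝ) - Nc i)
    (fun i => (N i : ℝ)) (fun i hi => sub_nonneg.mpr (by exact_mod_cast h i hi))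
    (fun i _ => sub_le_self _ (Nat.cast_nonneg _))
  rw [Finset.sum_sub_distrib] at hnc
  simp only [entTerm, logb, mul_div_assoc', ← add_div]
  rw [← Finset.sum_div, div_le_div_iff_of_pos_right (log_pos one_lt_two), Finset.sum_add_distrib]
  push_cast
  exact add_le_add hc hnc

theorem refined_entropy_le_coarse_general
    (W W' Sigma : Type) [Fintype W] [Fintype W'] [Fintype Sigma] [DecidableEq W]
    (φ : W' → W)
    (nw : W → ℕ) (nwc : W → Sigma → ℕ)
    (nw' : W' → ℕ) (nwc' : W' → Sigma → ℕ)
    (hle' : ∀ w' c, nwc' w' c ≤ nw' w')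
    (href : ∀ w, nw w = ∑ w' ∈ Finset.univ.filter (fun w' => φ w' = w), nw' w')
    (hrefc : ∀ w c, nwc w c = ∑ w' ∈ Finset.univ.filter (fun w' => φ w' = w), nwc' w' c) :
    ∑ w' : W', ∑ c : Sigma, entTerm (nw' w') (nwc' w' c) ≤
      ∑ w : W, ∑ c : Sigma, entTerm (nw w) (nwc w c) := by
  rw [← Finset.sum_fiberwise Finset.univ φ]
  refine Finset.sum_le_sum fun w _ => ?_
  rw [Finset.sum_comm]
  refine Finset.sum_le_sum fun c _ => ?_
  rw [href w, hrefc w c]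
  exact sum_entTerm_le_entTerm_sum _ _ _ fun w' _ => hle' w' c

/-- Refining contexts does not increase the total (unnormalized)
entropy.  Here `W'` refines `W` via a map `φ : W' → W`: for each coarse context `w`,
`n_w` (resp. `n_{w,c}`) is the sum of `n'_{w'}` (resp. `n'_{w',c}`) over the refined
contexts `w'` with `φ w' = w`.  Then the refined entropy sum is at most the coarse one. -/
theorem refined_entropy_le_coarse
    (W W' Sigma : Type) [Fintype W] [Fintype W'] [Fintype Sigma] [DecidableEq W]
    (φ : W' → W)
    (nw : W → ℕ) (nwc : W → Sigma → ℕ)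
    (nw' : W' → ℕ) (nwc' : W' → Sigma → ℕ)
    (hle : ∀ w c, nwc w c ≤ nw w)
    (hle' : ∀ w' c, nwc' w' c ≤ nw' w')
    (href : ∀ w, nw w = ∑ w' ∈ Finset.univ.filter (fun w' => φ w' = w), nw' w')
    (hrefc : ∀ w c, nwc w c = ∑ w' ∈ Finset.univ.filter (fun w' => φ w' = w), nwc' w' c) :
    ∑ w' : W', ∑ c : Sigma, entTerm (nw' w') (nwc' w' c) ≤
      ∑ w : W, ∑ c : Sigma, entTerm (nw w) (nwc w c) :=
  refined_entropy_le_coarse_general W W' Sigma φ nw nwc nw' nwc' hle' href hrefc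
end

section
/- Let [l, l+s) ⊆ [0, 1) be a half-open interval with s > 0, and let μ = l + s/2. Let d = ⌈log₂(2/s)⌉ and let μ_d = ⌊μ·2^d⌋/2^d be the truncation of μ to its first d binary digits. Then μ_d ∈ [l, l+s). -/
open Real

/-!
Truncating `x` to a multiple of `1 / a` loses less than `1 / a`, and the choice
`d = ⌈log₂(2/s)⌉` makes `2^(-d) ≤ s/2`. Truncating the midpoint `l + s/2` therefore
lands in `(l, l + s/2]`.
-/

theorem Real.self_le_zpow_ceil_logb {b x : ℝ} (hb : 1 < b) (hx : 0 < x) :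
    x ≤ b ^ ⌈logb b x⌉ := by
  rw [← rpow_intCast, ← logb_le_iff_le_rpow hb hx]
  exact Int.le_ceil _

section Truncation

variable {a : ℝ}

theorem Int.floor_mul_div_le (x : ℝ) (ha : 0 < a) : (⌊x * a⌋ : ℝ) / a ≤ x :=
  (div_le_iff₀ ha).2 (Int.floor_le _)

theorem Int.sub_inv_lt_floor_mul_div (x : ℝ) (ha : 0 < a) : x - a⁻¹ < (⌊x * a⌋ : ℝ) / a := by
  rw [lt_div_iff₀ ha, sub_mul, inv_mul_cancel₀ ha.ne']
  exact Int.sub_one_lt_floor _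

theorem Int.floor_mul_div_mem_Ico_of_two_div_le {l s : ℝ} (hs : 0 < s) (ha : 0 < a)
    (hsa : 2 / s ≤ a) : (⌊(l + s / 2) * a⌋ : ℝ) / a ∈ Set.Ico l (l + s) := by
  have hinv : a⁻¹ ≤ s / 2 := by
    rw [inv_le_comm₀ ha (by positivity), inv_div]
    exact hsa
  constructor
  · linarith [Int.sub_inv_lt_floor_mul_div (l + s / 2) ha]
  · linarith [Int.floor_mul_div_le (l + s / 2) ha]

end Truncation

theorem arithmetic_coding_truncation_general (l s : ℝ) (hs : 0 < s) :
    l ≤ (⌊(l + s / 2) * 2 ^ (⌈logb 2 (2 / s)⌉ : ℤ)⌋ : ℝ) / 2 ^ (⌈logb 2 (2 / s)⌉ : ℤ) ∧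
    (⌊(l + s / 2) * 2 ^ (⌈logb 2 (2 / s)⌉ : ℤ)⌋ : ℝ) / 2 ^ (⌈logb 2 (2 / s)⌉ : ℤ) < l + s :=
  Int.floor_mul_div_mem_Ico_of_two_div_le hs (by positivity)
    (self_le_zpow_ceil_logb one_lt_two (by positivity))

/-- **truncation lemma of arithmetic coding.**
Let `[l, l+s) ⊆ [0,1)` with `s > 0`, `μ = l + s/2`, `d = ⌈log₂(2/s)⌉` and let
`μ_d = ⌊μ·2^d⌋/2^d` be `μ` truncated to its first `d` binary digits.
Then `μ_d ∈ [l, l+s)`. -/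
theorem arithmetic_coding_truncation (l s : ℝ) (hl : 0 ≤ l) (hs : 0 < s)
    (hls : l + s ≤ 1) :
    l ≤ (⌊(l + s / 2) * 2 ^ (⌈logb 2 (2 / s)⌉ : ℤ)⌋ : ℝ) / 2 ^ (⌈logb 2 (2 / s)⌉ : ℤ) ∧
    (⌊(l + s / 2) * 2 ^ (⌈logb 2 (2 / s)⌉ : ℤ)⌋ : ℝ) / 2 ^ (⌈logb 2 (2 / s)⌉ : ℤ) < l + s :=
  arithmetic_coding_truncation_general l s hs
end

section
/- Let T be the complete balanced binary trie of height h ≥ 1 over the alphabet {a, b}, with n = 2^{h+1} - 1 nodes, and let u_1, ..., u_n be its nodes in co-lexicographic order (sorted by the reversal-free co-lexicographic order of their incoming root-to-node strings). Then in the sequence out(u_1), ..., out(u_n), every maximal run of consecutive leaves (nodes u_i with out(u_i) = ∅), except possibly the last one containing u_n, has length exactly 2, and the total number of XBWT runs r satisfies r = (n+1)/2. -/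
/-- A node of the complete balanced binary trie of height `h`: a depth `d ≤ h`
together with the sequence of binary branch choices along the root-to-node path
(`false` = label `a`, `true` = label `b`). -/
def BNode (h : ℕ) : Type := Σ d : Fin (h + 1), Fin d → Bool

instance (h : ℕ) : Fintype (BNode h) := by unfold BNode; infer_instance
instance (h : ℕ) : DecidableEq (BNode h) := by unfold BNode; infer_instance

/-- The string (root-to-node path labels) reaching a node. -/
def BNode.str {h : ℕ} (x : BNode h) : List Bool := List.ofFn x.2

/-- Co-lexicographic order: compare the reaching strings character by character
from right to left (i.e. lexicographic order of the reversed strings, with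
`false < true` and the empty string smallest). -/
def BNode.colexLt {h : ℕ} (x z : BNode h) : Prop :=
  List.Lex (· < ·) x.str.reverse z.str.reverse

/-- A node is a leaf iff it has depth `h`. -/
def BNode.isLeaf {h : ℕ} (x : BNode h) : Prop := (x.1 : ℕ) = h

/-- The set of labels of edges outgoing from a node: `∅` at a leaf,
the full binary alphabet at an internal node. -/
def BNode.out {h : ℕ} (x : BNode h) : Set Bool :=
  {c : Bool | (x.1 : ℕ) < h}

/-! Nodes are compared through their reversed path strings `revStr`. Two leaves `aα`, `bα` have
reversed strings `ρa`, `ρb` (with `ρ` the reversal of `α`), and anything strictly between them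
would have to extend `ρa`, which is too deep: so `aα ⋖ bα`. A leaf `bα` is never directly
followed by another leaf `z`, since deleting the first letter of the path of `z` gives an
internal node strictly between them. Hence the node directly before a leaf is internal iff that
leaf starts with `a`. So leaf runs are exactly the pairs `aα, bα`, and for each letter `c` the
`c`-run breaks `i` correspond, via `i ↦ u (i + 1)`, to the `2 ^ (h - 1)` leaves starting with
`a`; thus `r = 2 ^ h = (n + 1) / 2`. -/

namespace List

theorem lt_append_cons {α : Type*} [LT α] (l : List α) (a : α) (t : List α) : l < l ++ a :: t := by
  simpa using append_left_lt (l₁ := l) (nil_lt_cons a t)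

theorem length_lt_of_append_false_lt_of_lt_append_true :
    ∀ (R s : List Bool), R ++ [false] < s → s < R ++ [true] → R.length + 1 < s.length
  | [], [], h₁, _ => absurd h₁ (not_lt_nil _)
  | [], b :: s, h₁, h₂ => by
    cases b <;> cases s <;> simp_all [cons_lt_cons_iff]
  | _ :: _, [], h₁, _ => absurd h₁ (not_lt_nil _)
  | a :: R, b :: s, h₁, h₂ => by
    simp only [cons_append, cons_lt_cons_iff] at h₁ h₂
    have hab : a = b :=
      le_antisymm (h₁.elim le_of_lt fun h => h.1.le) (h₂.elim le_of_lt fun h => h.1.le)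
    subst hab
    simpa using length_lt_of_append_false_lt_of_lt_append_true R s (by simp_all) (by simp_all)

theorem append_true_lt_of_append_lt : ∀ (R S : List Bool) (d : Bool), R.length = S.length →
    R ++ [true] < S ++ [d] → R ++ [true] < S
  | [], [], d, _, h => by revert h; cases d <;> decide
  | a :: R, b :: S, d, hl, h => by
    simp only [cons_append, cons_lt_cons_iff] at h ⊢
    exact h.imp_right fun ⟨hab, h⟩ => ⟨hab, append_true_lt_of_append_lt R S d (by simpa using hl) h⟩

end List

theorem StrictMono.apply_covBy_apply_iff_succ_eq {α : Type*} [Preorder α] {n : ℕ}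
    {u : Fin n → α} (hu : StrictMono u) (hsurj : Function.Surjective u) {i j : Fin n} :
    u i ⋖ u j ↔ (i : ℕ) + 1 = j := by
  have := apply_covBy_apply_iff (hu.orderIsoOfSurjective u hsurj) (a := i) (b := j)
  rwa [StrictMono.coe_orderIsoOfSurjective, Fin.covBy_iff, Nat.covBy_iff_add_one_eq] at this


namespace BNode

variable {h : ℕ}

def revStr (x : BNode h) : List Bool := x.str.reverse

theorem length_revStr (x : BNode h) : x.revStr.length = x.1 := by
  simp [revStr, str]

theorem revStr_injective : Function.Injective (revStr : BNode h → List Bool) := by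
  rintro ⟨d, f⟩ ⟨d', f'⟩ hx
  obtain ⟨hd, hf⟩ := Sigma.mk.inj (List.ofFn_inj'.1 (List.reverse_injective hx))
  obtain rfl : d = d' := Fin.ext hd
  cases hf
  rfl

theorem exists_revStr_eq (l : List Bool) (hl : l.length ≤ h) : ∃ x : BNode h, x.revStr = l :=
  ⟨⟨⟨l.reverse.length, by simpa using Nat.lt_succ_of_le hl⟩, fun i => l.reverse.get i⟩, by
    show (List.ofFn l.reverse.get).reverse = l
    rw [List.ofFn_get, List.reverse_reverse]⟩

instance : LinearOrder (BNode h) := LinearOrder.lift' revStr revStr_injective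

theorem lt_iff_colexLt {x y : BNode h} : x < y ↔ x.colexLt y := Iff.rfl

theorem lt_iff_revStr_lt {x y : BNode h} : x < y ↔ x.revStr < y.revStr := Iff.rfl

theorem mem_out_iff_not_isLeaf {c : Bool} {x : BNode h} : c ∈ x.out ↔ ¬ x.isLeaf := by
  have := x.1.isLt
  simp only [out, isLeaf, Set.mem_ofPred_eq]
  omega

def IsLeafStartingWith (c : Bool) (x : BNode h) : Prop :=
  ∃ R : List Bool, R.length + 1 = h ∧ x.revStr = R ++ [c]

variable {x y z : BNode h} {c : Bool}

theorem IsLeafStartingWith.isLeaf (hx : IsLeafStartingWith c x) : x.isLeaf := by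
  obtain ⟨R, hR, hx⟩ := hx
  have := congrArg List.length hx
  simp only [length_revStr, List.length_append, List.length_singleton] at this
  exact this.trans hR

theorem exists_isLeafStartingWith (hh : 1 ≤ h) (hx : x.isLeaf) : ∃ c, IsLeafStartingWith c x := by
  have hlen : x.revStr.length = h := (length_revStr x).trans hx
  obtain hnil | ⟨R, c, hRc⟩ := x.revStr.eq_nil_or_concat
  · simp [hnil] at hlen
    omega
  · rw [List.concat_eq_append] at hRc
    refine ⟨c, R, ?_, hRc⟩
    simpa [hRc] using hlen

theorem exists_lt_of_isLeaf (hh : 1 ≤ h) (hx : x.isLeaf) : ∃ y, y < x := by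
  obtain ⟨c, R, -, hRc⟩ := exists_isLeafStartingWith hh hx
  obtain ⟨y, hy⟩ := exists_revStr_eq (h := h) [] (Nat.zero_le h)
  refine ⟨y, ?_⟩
  rw [lt_iff_revStr_lt, hy, hRc]
  cases R <;> exact List.nil_lt_cons _ _

theorem exists_gt_of_not_isLeaf (hx : ¬ x.isLeaf) : ∃ y, x < y := by
  have hlen : x.revStr.length < h := by
    have := x.1.isLt
    rw [length_revStr]
    exact lt_of_le_of_ne (Nat.lt_succ_iff.1 this) hx
  obtain ⟨y, hy⟩ := exists_revStr_eq (x.revStr ++ [true]) (by simpa using hlen)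
  exact ⟨y, by rw [lt_iff_revStr_lt, hy]; exact List.lt_append_cons _ _ _⟩

theorem covBy_of_siblings {R : List Bool} (hR : R.length + 1 = h)
    (hx : x.revStr = R ++ [false]) (hy : y.revStr = R ++ [true]) : x ⋖ y := by
  refine ⟨?_, fun z hxz hzy => ?_⟩
  · rw [lt_iff_revStr_lt, hx, hy]
    exact List.append_left_lt (by decide)
  · rw [lt_iff_revStr_lt, hx] at hxz
    rw [lt_iff_revStr_lt, hy] at hzy
    have := List.length_lt_of_append_false_lt_of_lt_append_true R _ hxz hzy
    have := z.1.isLt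
    rw [length_revStr] at *
    omega

theorem exists_covBy_isLeafStartingWith_true (hy : IsLeafStartingWith false y) :
    ∃ z, y ⋖ z ∧ IsLeafStartingWith true z := by
  obtain ⟨R, hR, hy⟩ := hy
  obtain ⟨z, hz⟩ := exists_revStr_eq (h := h) (R ++ [true]) (by simp [hR])
  exact ⟨z, covBy_of_siblings hR hy hz, R, hR, hz⟩

theorem not_covBy_of_isLeafStartingWith_true (hx : IsLeafStartingWith true x) (hz : z.isLeaf) :
    ¬ x ⋖ z := by
  intro hxz
  obtain ⟨R, hR, hx⟩ := hx
  obtain ⟨d, S, hS, hz⟩ := exists_isLeafStartingWith (by omega) hz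
  obtain ⟨w, hw⟩ := exists_revStr_eq (h := h) S (by omega)
  refine hxz.2 (c := w) ?_ ?_
  · have := hxz.1
    rw [lt_iff_revStr_lt, hx, hz] at this
    rw [lt_iff_revStr_lt, hx, hw]
    exact List.append_true_lt_of_append_lt R S d (by omega) this
  · rw [lt_iff_revStr_lt, hw, hz]
    exact List.lt_append_cons _ _ _

theorem isLeafStartingWith_false_iff_of_covBy (hh : 1 ≤ h) (hxy : x ⋖ y) (hy : y.isLeaf) :
    IsLeafStartingWith false y ↔ ¬ x.isLeaf := by
  constructor
  · rintro ⟨R, hR, hyR⟩ hx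
    obtain ⟨c, hxc⟩ := exists_isLeafStartingWith hh hx
    cases c with
    | true => exact not_covBy_of_isLeafStartingWith_true hxc hy hxy
    | false =>
      obtain ⟨z, hxz, S, -, hz⟩ := exists_covBy_isLeafStartingWith_true hxc
      rw [hxy.unique_right hxz, hz] at hyR
      simpa using (List.append_inj' hyR rfl).2
  · intro hx
    obtain ⟨c, R, hR, hyR⟩ := exists_isLeafStartingWith hh hy
    cases c with
    | false => exact ⟨R, hR, hyR⟩
    | true =>
      obtain ⟨w, hw⟩ := exists_revStr_eq (h := h) (R ++ [false]) (by simp [hR])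
      have hwx : w = x := (covBy_of_siblings hR hw hyR).unique_left hxy
      exact absurd (hwx ▸ IsLeafStartingWith.isLeaf ⟨R, hR, hw⟩) hx

theorem card_isLeafStartingWith (hh : 1 ≤ h) (c : Bool) :
    Nat.card {x : BNode h // IsLeafStartingWith c x} = 2 ^ (h - 1) := by
  have hbij : Function.Bijective (fun x => ⟨x.1.revStr.dropLast, by
      obtain ⟨R, hR, hx⟩ := x.2; simp [hx]; omega⟩ :
        {x : BNode h // IsLeafStartingWith c x} → List.Vector Bool (h - 1)) := by
    refine ⟨fun ⟨x, R, _, hx⟩ ⟨y, S, _, hy⟩ hxy => ?_, fun (R : List.Vector Bool (h - 1)) => ?_⟩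
    · simp only [hx, hy, List.dropLast_concat, Subtype.mk.injEq] at hxy
      subst hxy
      exact Subtype.ext (revStr_injective (hx.trans hy.symm))
    · obtain ⟨x, hx⟩ := exists_revStr_eq (h := h) (R.toList ++ [c]) (by simp; omega)
      exact ⟨⟨x, R.toList, by simp; omega, hx⟩, List.Vector.eq _ _ (by simp [hx])⟩
  rw [Nat.card_eq_of_bijective _ hbij]
  show Nat.card (List.Vector Bool (h - 1)) = _
  rw [Nat.card_eq_fintype_card, card_vector, Fintype.card_bool]

variable {n : ℕ} {u : Fin n → BNode h}

theorem pos_of_isLeaf_apply (hu : StrictMono u) (hsurj : Function.Surjective u) (hh : 1 ≤ h)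
    {i : Fin n} (hi : (u i).isLeaf) : 0 < (i : ℕ) := by
  obtain ⟨y, hy⟩ := exists_lt_of_isLeaf hh hi
  obtain ⟨k, rfl⟩ := hsurj y
  exact Nat.zero_lt_of_lt (hu.lt_iff_lt.1 hy)

theorem succ_lt_of_not_isLeaf_apply (hu : StrictMono u) (hsurj : Function.Surjective u)
    {i : Fin n} (hi : ¬ (u i).isLeaf) : (i : ℕ) + 1 < n := by
  obtain ⟨y, hy⟩ := exists_gt_of_not_isLeaf hi
  obtain ⟨k, rfl⟩ := hsurj y
  exact (Nat.succ_le_of_lt (hu.lt_iff_lt.1 hy)).trans_lt k.isLt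

theorem leaf_run_eq_pair (hu : StrictMono u) (hsurj : Function.Surjective u) (hh : 1 ≤ h)
    (i j : ℕ) (hij : i ≤ j) (hjn : j + 1 < n)
    (hleaf : ∀ t (ht : t < n), i ≤ t → t ≤ j → (u ⟨t, ht⟩).isLeaf)
    (hprev : ∀ hi0 : 0 < i, ¬ (u ⟨i - 1, by omega⟩).isLeaf)
    (hnext : ¬ (u ⟨j + 1, hjn⟩).isLeaf) : j = i + 1 := by
  have hi0 : 0 < i := pos_of_isLeaf_apply hu hsurj hh (hleaf i (by omega) le_rfl hij)
  have hstart : IsLeafStartingWith false (u ⟨i, by omega⟩) :=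
    (isLeafStartingWith_false_iff_of_covBy hh
      ((hu.apply_covBy_apply_iff_succ_eq hsurj).2 (by simp; omega))
      (hleaf i _ le_rfl hij)).2 (hprev hi0)
  obtain ⟨z, hcov, hz⟩ := exists_covBy_isLeafStartingWith_true hstart
  obtain ⟨k, rfl⟩ := hsurj z
  have hk : (k : ℕ) = i + 1 := ((hu.apply_covBy_apply_iff_succ_eq hsurj).1 hcov).symm
  have hij' : i + 1 ≤ j := by
    by_contra hji
    obtain rfl : j = i := by omega
    exact hnext ((Fin.ext hk.symm : (⟨j + 1, hjn⟩ : Fin n) = k) ▸ hz.isLeaf)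
  by_contra hne
  exact not_covBy_of_isLeafStartingWith_true hz (hleaf (i + 2) (by omega) (by omega) (by omega))
    ((hu.apply_covBy_apply_iff_succ_eq hsurj).2 (by simp; omega))

theorem card_runBreaks (hu : StrictMono u) (hsurj : Function.Surjective u) (hh : 1 ≤ h)
    (c : Bool) :
    Nat.card {i : Fin n // c ∈ (u i).out ∧ ∀ hlt : (i : ℕ) + 1 < n, c ∉ (u ⟨i + 1, hlt⟩).out} =
      Nat.card {x : BNode h // IsLeafStartingWith false x} := by
  simp only [mem_out_iff_not_isLeaf, not_not]
  have hcov {i j : Fin n} : u i ⋖ u j ↔ (i : ℕ) + 1 = j := hu.apply_covBy_apply_iff_succ_eq hsurj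
  refine Nat.card_eq_of_bijective
    (fun i => ⟨u ⟨i.1 + 1, succ_lt_of_not_isLeaf_apply hu hsurj i.2.1⟩,
      (isLeafStartingWith_false_iff_of_covBy hh (hcov.2 rfl) (i.2.2 _)).2 i.2.1⟩) ⟨?_, ?_⟩
  · rintro ⟨i, _⟩ ⟨j, _⟩ hij
    have := congrArg Fin.val (hu.injective (congrArg Subtype.val hij))
    exact Subtype.ext (Fin.ext (by simpa using this))
  · rintro ⟨y, hy⟩
    obtain ⟨m, rfl⟩ := hsurj y
    have hm := pos_of_isLeaf_apply hu hsurj hh hy.isLeaf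
    have hsucc : ((⟨m - 1 + 1, by omega⟩ : Fin n)) = m := Fin.ext (by simp; omega)
    have hprev : ¬ (u ⟨m - 1, by omega⟩).isLeaf :=
      (isLeafStartingWith_false_iff_of_covBy hh (hcov.2 (by simp; omega)) hy.isLeaf).1 hy
    exact ⟨⟨⟨m - 1, by omega⟩, hprev, fun _ => hsucc ▸ hy.isLeaf⟩, Subtype.ext (congrArg u hsucc)⟩

end BNode

/-- Let `T` be the complete balanced binary trie of height
`h ≥ 1`, `n = 2^(h+1) - 1`, and let `u 0, ..., u (n-1)` enumerate its nodes in
co-lexicographic order.  Then (1) every maximal run of consecutive leaves in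
`out (u 0), ..., out (u (n-1))`, except possibly the one containing the last
node, has length exactly 2; and (2) the number of XBWT runs
`r = ∑_{c} #{ i | c ∈ out(u i) ∧ (i = n-1 ∨ c ∉ out(u (i+1))) }`
satisfies `r = (n+1)/2`. -/
theorem complete_binary_trie_xbwt_runs (h : ℕ) (hh : 1 ≤ h)
    (u : Fin (2 ^ (h + 1) - 1) → BNode h)
    (hbij : Function.Bijective u)
    (hmono : ∀ i j : Fin (2 ^ (h + 1) - 1), i < j → BNode.colexLt (u i) (u j)) :
    (∀ i j : ℕ, ∀ hij : i ≤ j, ∀ hjn : j + 1 < 2 ^ (h + 1) - 1,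
      (∀ t (ht : t < 2 ^ (h + 1) - 1), i ≤ t → t ≤ j → BNode.isLeaf (u ⟨t, ht⟩)) →
      (∀ hi0 : 0 < i, ¬ BNode.isLeaf (u ⟨i - 1, by omega⟩)) →
      ¬ BNode.isLeaf (u ⟨j + 1, by omega⟩) →
      j = i + 1) ∧
    (∑ c : Bool, Nat.card {i : Fin (2 ^ (h + 1) - 1) //
        c ∈ BNode.out (u i) ∧
        ∀ hlt : (i : ℕ) + 1 < 2 ^ (h + 1) - 1, c ∉ BNode.out (u ⟨(i : ℕ) + 1, hlt⟩)})
      = (2 ^ (h + 1) - 1 + 1) / 2 := by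
  have hu : StrictMono u := fun i j hij => BNode.lt_iff_colexLt.2 (hmono i j hij)
  refine ⟨BNode.leaf_run_eq_pair hu hbij.2 hh, ?_⟩
  simp only [BNode.card_runBreaks hu hbij.2 hh, BNode.card_isLeafStartingWith hh,
    Finset.sum_const, Finset.card_univ, Fintype.card_bool, smul_eq_mul]
  have : 2 ^ (h + 1) = 2 * (2 * 2 ^ (h - 1)) := by rw [← pow_succ', ← pow_succ']; congr 1; omega
  omega
end

section
/- There is a bijection between ordered rooted trees with n nodes and Łukasiewicz paths of length n: mapping a tree to the sequence L[i] = Σ_{j=1}^{i} (deg(u_j) - 1), where u_1, ..., u_n are the nodes in pre-order and deg(u) is the number of children of u, is a bijection onto the set of integer sequences L of length n with L[n] = -1, L[i] ≥ 0 for 1 ≤ i ≤ n-1, and L[i+1] - L[i] ≥ -1 for 1 ≤ i ≤ n-1. -/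
/-!
The pre-order degree word `d` of a tree is a Łukasiewicz word: the steps `d i - 1` sum to `-1`
while every proper prefix has nonnegative sum. Conversely, since steps are `≥ -1`, the first prefix
of negative sum of a word is a Łukasiewicz word; cutting there repeatedly splits a Łukasiewicz word
`k :: d` uniquely into a root of degree `k` followed by `k` Łukasiewicz words, so by induction
trees and Łukasiewicz words correspond bijectively. Prefix sums of the steps turn Łukasiewicz
words into Łukasiewicz paths and back.
-/

/-- An ordered rooted tree: a node together with a (linearly ordered) list of
child subtrees. -/
inductive OTree : Type where
  | node : List OTree → OTree

/-- Number of nodes. -/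
def OTree.size : OTree → ℕ
  | .node cs => 1 + (cs.attach.map (fun t => t.1.size)).sum
decreasing_by
  have h := List.sizeOf_lt_of_mem t.2
  simp only [OTree.node.sizeOf_spec]
  omega

/-- The sequence of out-degrees (numbers of children) of the nodes in pre-order:
root first, then recursively the subtrees of the children in order. -/
def OTree.degSeq : OTree → List ℕ
  | .node cs => cs.length :: (cs.attach.map (fun t => t.1.degSeq)).flatten
decreasing_by
  have h := List.sizeOf_lt_of_mem t.2
  simp only [OTree.node.sizeOf_spec]
  omega

/-- The list of prefix sums `L[i] = l_1 + ⋯ + l_{i+1}` of a list of integers. -/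
def psums (l : List ℤ) : List ℤ :=
  (List.range l.length).map (fun i => (l.take (i + 1)).sum)

/-- The Łukasiewicz sequence of an ordered tree:
`L[i] = ∑_{j ≤ i} (deg(u_j) - 1)` over the pre-order nodes `u_j`. -/
def OTree.luka (t : OTree) : List ℤ :=
  psums (t.degSeq.map (fun k => (k : ℤ) - 1))

/-- `l` is a Łukasiewicz path of length `n`: `L[n] = -1` (1-based), `L[i] ≥ 0`
for `1 ≤ i ≤ n-1`, and consecutive differences are `≥ -1` (0-based below). -/
def IsLuka (n : ℕ) (l : List ℤ) : Prop :=
  l.length = n ∧ l.getD (n - 1) 0 = -1 ∧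
    ∀ i : ℕ, i + 1 < n →
      0 ≤ l.getD i 0 ∧ l.getD (i + 1) 0 - l.getD i 0 ≥ -1

namespace OTree

@[elab_as_elim]
theorem induction {motive : OTree → Prop}
    (node : ∀ cs, (∀ c ∈ cs, motive c) → motive (.node cs)) : ∀ t, motive t
  | .node cs => node cs fun c _ => induction node c
decreasing_by
  have := List.sizeOf_lt_of_mem ‹c ∈ cs›
  simp only [OTree.node.sizeOf_spec]
  omega

theorem size_node (cs : List OTree) : (node cs).size = 1 + (cs.map size).sum := by
  simp [size]

theorem degSeq_node (cs : List OTree) :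
    (node cs).degSeq = cs.length :: (cs.map degSeq).flatten := by
  simp [degSeq]

theorem length_degSeq (t : OTree) : t.degSeq.length = t.size := by
  induction t using OTree.induction with
  | node cs ih =>
    rw [degSeq_node, size_node, List.length_cons, List.length_flatten, List.map_map, add_comm]
    congr 2
    exact List.map_congr_left ih

end OTree

def lukaSteps (d : List ℕ) : List ℤ := d.map fun k : ℕ => (k : ℤ) - 1

def excess (d : List ℕ) : ℤ := (lukaSteps d).sum

@[simp] theorem excess_nil : excess [] = 0 := rfl

@[simp] theorem excess_cons (k : ℕ) (d : List ℕ) : excess (k :: d) = k - 1 + excess d := by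
  simp [excess, lukaSteps]

@[simp] theorem excess_append (d e : List ℕ) : excess (d ++ e) = excess d + excess e := by
  simp [excess, lukaSteps]

theorem excess_take (d : List ℕ) (i : ℕ) : excess (d.take i) = ((lukaSteps d).take i).sum := by
  rw [excess, lukaSteps, lukaSteps, List.map_take]

theorem excess_take_sub_one_le (d : List ℕ) (i : ℕ) :
    excess (d.take i) - 1 ≤ excess (d.take (i + 1)) := by
  rw [List.take_add_one, excess_append]
  cases d[i]? <;> simp
  omega

def IsLukaWord (d : List ℕ) : Prop :=
  excess d = -1 ∧ ∀ i < d.length, 0 ≤ excess (d.take i)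

theorem IsLukaWord.ne_nil {d : List ℕ} (hd : IsLukaWord d) : d ≠ [] := by
  rintro rfl
  simpa using hd.1

/-- The first prefix of negative excess has excess exactly `-1`, as every step is `≥ -1`. -/
theorem exists_isLukaWord_take {d : List ℕ} (hd : excess d < 0) :
    ∃ i, IsLukaWord (d.take i) := by
  classical
  have hex : ∃ i, excess (d.take i) < 0 := ⟨d.length, by simpa using hd⟩
  have hneg : excess (d.take (Nat.find hex)) < 0 := Nat.find_spec hex
  have hmin : ∀ j < Nat.find hex, 0 ≤ excess (d.take j) := fun j hj =>
    not_lt.1 (Nat.find_min hex hj)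
  have hle : Nat.find hex ≤ d.length := Nat.find_min' hex (by simpa using hd)
  obtain ⟨j, hj⟩ := Nat.exists_eq_add_one_of_ne_zero (n := Nat.find hex) fun h => by
    simp [h] at hneg
  refine ⟨Nat.find hex, ?_, fun k hk => ?_⟩
  · have := excess_take_sub_one_le d j
    have := hmin j (by omega)
    rw [hj] at hneg ⊢
    omega
  · rw [List.length_take_of_le hle] at hk
    rw [List.take_take, min_eq_left hk.le]
    exact hmin k hk

theorem excess_flatten_of_isLukaWord {bs : List (List ℕ)} (hbs : ∀ b ∈ bs, IsLukaWord b) :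
    excess bs.flatten = -bs.length ∧
      ∀ i < bs.flatten.length, 1 - (bs.length : ℤ) ≤ excess (bs.flatten.take i) := by
  induction bs with
  | nil => simp
  | cons b bs ih =>
    obtain ⟨hb, hbs⟩ := List.forall_mem_cons.1 hbs
    obtain ⟨hsum, hpre⟩ := ih hbs
    simp only [List.flatten_cons, excess_append, hb.1, hsum, List.length_cons, List.length_append,
      Nat.cast_succ]
    refine ⟨by ring, fun i hi => ?_⟩
    rcases lt_or_ge i b.length with hib | hib
    · rw [List.take_append_of_le_length hib.le]
      have := hb.2 i hib
      omega
    · rw [List.take_append, List.take_of_length_le hib, excess_append, hb.1]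
      have := hpre (i - b.length) (by omega)
      omega

theorem exists_flatten_eq_of_excess {k : ℕ} {d : List ℕ} (hd : excess d = -k)
    (hpre : ∀ i < d.length, 1 - (k : ℤ) ≤ excess (d.take i)) :
    ∃ bs : List (List ℕ), bs.length = k ∧ (∀ b ∈ bs, IsLukaWord b) ∧ bs.flatten = d := by
  induction k generalizing d with
  | zero =>
    refine ⟨[], rfl, by simp, (List.eq_nil_iff_forall_not_mem.2 fun x hx => ?_).symm⟩
    have := hpre 0 (List.length_pos_of_mem hx)
    simp at this
  | succ k ih =>
    obtain ⟨i, hb⟩ := exists_isLukaWord_take (show excess d < 0 by omega)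
    have hsplit := List.take_append_drop i d
    have hrest : excess (d.drop i) = -k := by
      have := congrArg excess hsplit
      rw [excess_append, hb.1] at this
      push_cast at hd
      omega
    have hrestpre : ∀ j < (d.drop i).length, 1 - (k : ℤ) ≤ excess ((d.drop i).take j) := by
      intro j hj
      have := hpre (i + j) (by simp at hj; omega)
      rw [List.take_add, excess_append, hb.1] at this
      push_cast at this
      omega
    obtain ⟨bs, hlen, hbs, hflat⟩ := ih hrest hrestpre
    refine ⟨d.take i :: bs, by simp [hlen], List.forall_mem_cons.2 ⟨hb, hbs⟩, ?_⟩
    rw [List.flatten_cons, hflat, hsplit]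

theorem isLukaWord_cons_iff {k : ℕ} {d : List ℕ} :
    IsLukaWord (k :: d) ↔
      ∃ bs : List (List ℕ), bs.length = k ∧ (∀ b ∈ bs, IsLukaWord b) ∧ bs.flatten = d := by
  constructor
  · rintro ⟨hsum, hpre⟩
    refine exists_flatten_eq_of_excess (by simp at hsum; omega) fun i hi => ?_
    have := hpre (i + 1) (by simpa using hi)
    simp only [List.take_succ_cons, excess_cons] at this
    omega
  · rintro ⟨bs, rfl, hbs, rfl⟩
    obtain ⟨hsum, hpre⟩ := excess_flatten_of_isLukaWord hbs
    refine ⟨by simp [hsum]; ring, fun i hi => ?_⟩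
    cases i with
    | zero => simp
    | succ i =>
      have := hpre i (by simpa using hi)
      simp only [List.take_succ_cons, excess_cons]
      omega

theorem IsLukaWord.eq_of_prefix {b c : List ℕ} (hb : IsLukaWord b) (hc : IsLukaWord c)
    (h : b <+: c) : b = c := by
  refine h.eq_of_length (le_antisymm h.length_le (not_lt.1 fun hlt => ?_))
  have := hc.2 _ hlt
  rw [← List.prefix_iff_eq_take.1 h, hb.1] at this
  omega

theorem IsLukaWord.eq_of_append_eq_append {b c x y : List ℕ} (hb : IsLukaWord b)
    (hc : IsLukaWord c) (h : b ++ x = c ++ y) : b = c := by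
  rcases List.prefix_or_prefix_of_prefix (h ▸ List.prefix_append b x) (List.prefix_append c y)
    with h' | h'
  · exact hb.eq_of_prefix hc h'
  · exact (hc.eq_of_prefix hb h').symm

theorem eq_of_flatten_eq_flatten {bs cs : List (List ℕ)} (hbs : ∀ b ∈ bs, IsLukaWord b)
    (hcs : ∀ c ∈ cs, IsLukaWord c) (h : bs.flatten = cs.flatten) : bs = cs := by
  induction bs generalizing cs with
  | nil =>
    cases cs with
    | nil => rfl
    | cons c cs =>
      simp only [List.flatten_nil, List.flatten_cons, List.nil_eq, List.append_eq_nil_iff] at h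
      exact absurd h.1 (hcs c List.mem_cons_self).ne_nil
  | cons b bs ih =>
    cases cs with
    | nil =>
      simp only [List.flatten_nil, List.flatten_cons, List.append_eq_nil_iff] at h
      exact absurd h.1 (hbs b List.mem_cons_self).ne_nil
    | cons c cs =>
      obtain ⟨hb, hbs'⟩ := List.forall_mem_cons.1 hbs
      obtain ⟨hc, hcs'⟩ := List.forall_mem_cons.1 hcs
      rw [List.flatten_cons, List.flatten_cons] at h
      obtain rfl := hb.eq_of_append_eq_append hc h
      exact congrArg _ (ih hbs' hcs' (List.append_cancel_left h))

theorem List.eq_of_map_eq_map {α β : Type*} {f : α → β} {l l' : List α}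
    (hf : ∀ a ∈ l, ∀ b, f a = f b → a = b) (h : l.map f = l'.map f) : l = l' := by
  induction l generalizing l' with
  | nil => exact (List.map_eq_nil_iff.1 h.symm).symm
  | cons a l ih =>
    obtain ⟨b, l', rfl⟩ := List.exists_cons_of_ne_nil (l := l') (by rintro rfl; simp at h)
    obtain ⟨hab, hl⟩ := List.cons.inj h
    rw [hf a List.mem_cons_self b hab, ih (fun x hx => hf x (List.mem_cons_of_mem a hx)) hl]

namespace OTree

theorem isLukaWord_degSeq (t : OTree) : IsLukaWord t.degSeq := by
  induction t using OTree.induction with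
  | node cs ih =>
    rw [degSeq_node, isLukaWord_cons_iff]
    exact ⟨cs.map degSeq, List.length_map _, by simpa using ih, rfl⟩

theorem degSeq_injective : Function.Injective degSeq := by
  intro t t' h
  induction t using OTree.induction generalizing t' with
  | node cs ih =>
    obtain ⟨cs'⟩ := t'
    rw [degSeq_node, degSeq_node, List.cons.injEq] at h
    have hmap : cs.map degSeq = cs'.map degSeq :=
      eq_of_flatten_eq_flatten (by simp [isLukaWord_degSeq]) (by simp [isLukaWord_degSeq]) h.2
    rw [List.eq_of_map_eq_map (f := degSeq) (fun c hc c' hcc' => ih c hc hcc') hmap]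

theorem exists_degSeq_eq {d : List ℕ} (hd : IsLukaWord d) : ∃ t : OTree, t.degSeq = d := by
  induction h : d.length using Nat.strong_induction_on generalizing d with
  | _ n ih =>
    obtain ⟨k, r, rfl⟩ := List.exists_cons_of_ne_nil hd.ne_nil
    obtain ⟨bs, rfl, hbs, rfl⟩ := isLukaWord_cons_iff.1 hd
    obtain ⟨ts, rfl⟩ : bs ∈ Set.range (List.map degSeq) := by
      rw [Set.range_list_map]
      refine fun b hb => ih b.length ?_ (hbs b hb) rfl
      have := (List.sublist_flatten_of_mem hb).length_le
      simp only [List.length_cons] at h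
      omega
    exact ⟨node ts, by simp [degSeq_node]⟩

theorem luka_eq_psums_lukaSteps (t : OTree) : t.luka = psums (lukaSteps t.degSeq) := by
  -- the coercion in `luka` elaborates to `do let a ← t.degSeq; pure (a : ℤ)`
  simp only [luka, lukaSteps, bind_pure_comp, List.map_eq_map, List.map_map]
  rfl

end OTree

theorem length_psums (l : List ℤ) : (psums l).length = l.length := by
  simp [psums]

theorem psums_cons (a : ℤ) (l : List ℤ) : psums (a :: l) = a :: (psums l).map (a + ·) := by
  simp [psums, List.range_succ_eq_map, List.map_map, Function.comp_def, List.take_succ_cons]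

theorem psums_injective : Function.Injective psums := by
  intro l l' h
  induction l generalizing l' with
  | nil => exact (List.length_eq_zero_iff.1 (by rw [← length_psums, ← h]; rfl)).symm
  | cons a l ih =>
    cases l' with
    | nil => simp [psums] at h
    | cons b l' =>
      rw [psums_cons, psums_cons, List.cons.injEq] at h
      obtain ⟨rfl, h⟩ := h
      rw [ih (List.map_injective_iff.2 (add_right_injective a) h)]

theorem exists_psums_eq_map_add (l : List ℤ) (c : ℤ) : ∃ s, psums s = l.map (c + ·) := by
  induction l generalizing c with
  | nil => exact ⟨[], rfl⟩
  | cons x l ih =>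
    obtain ⟨s, hs⟩ := ih (-x)
    refine ⟨(c + x) :: s, ?_⟩
    simp [psums_cons, hs, Function.comp_def]

theorem psums_surjective : Function.Surjective psums := fun l => by
  simpa using exists_psums_eq_map_add l 0

theorem getD_psums {l : List ℤ} {i : ℕ} (hi : i < l.length) :
    (psums l).getD i 0 = (l.take (i + 1)).sum := by
  simp [psums, hi]

theorem getD_psums_zero {l : List ℤ} (h : 0 < l.length) : (psums l).getD 0 0 = l[0] := by
  rw [getD_psums h, List.sum_take_succ _ _ h]
  simp

theorem getD_psums_succ_sub_getD {l : List ℤ} {i : ℕ} (h : i + 1 < l.length) :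
    (psums l).getD (i + 1) 0 - (psums l).getD i 0 = l[i + 1] := by
  rw [getD_psums h, getD_psums (by omega), List.sum_take_succ _ _ h]
  ring

theorem lukaSteps_injective : Function.Injective lukaSteps :=
  List.map_injective_iff.2 fun a b h => by simpa using h

theorem isLuka_psums_lukaSteps_iff {n : ℕ} {d : List ℕ} :
    IsLuka n (psums (lukaSteps d)) ↔ d.length = n ∧ IsLukaWord d := by
  have hlen : (psums (lukaSteps d)).length = d.length := by simp [length_psums, lukaSteps]
  have hL : ∀ i < d.length, (psums (lukaSteps d)).getD i 0 = excess (d.take (i + 1)) :=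
    fun i hi => by rw [getD_psums (by simpa [lukaSteps] using hi), excess_take]
  constructor
  · rintro ⟨rfl, hlast, hcond⟩
    rw [hlen] at hlast hcond ⊢
    have hpos : 0 < d.length := by
      refine Nat.pos_of_ne_zero fun h => ?_
      simp [List.length_eq_zero_iff.1 h, lukaSteps, psums] at hlast
    rw [hL _ (by omega), Nat.sub_add_cancel hpos, List.take_length] at hlast
    refine ⟨rfl, hlast, fun i hi => ?_⟩
    cases i with
    | zero => simp
    | succ j =>
      rw [← hL j (by omega)]
      exact (hcond j hi).1
  · rintro ⟨rfl, hd⟩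
    have hpos : 0 < d.length := List.length_pos_of_ne_nil hd.ne_nil
    refine ⟨hlen, ?_, fun i hi => ⟨?_, ?_⟩⟩
    · rw [hL _ (by omega), Nat.sub_add_cancel hpos, List.take_length, hd.1]
    · rw [hL _ (by omega)]
      exact hd.2 _ hi
    · rw [getD_psums_succ_sub_getD (by simpa [lukaSteps] using hi)]
      simp only [lukaSteps, List.getElem_map]
      omega

theorem exists_psums_lukaSteps_eq {n : ℕ} {l : List ℤ} (hl : IsLuka n l) :
    ∃ d : List ℕ, psums (lukaSteps d) = l := by
  obtain ⟨s, rfl⟩ := psums_surjective l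
  obtain ⟨rfl, hlast, hcond⟩ := hl
  rw [length_psums] at hlast hcond
  have hs : ∀ x ∈ s, -1 ≤ x := by
    intro x hx
    obtain ⟨i, hi, rfl⟩ := List.getElem_of_mem hx
    cases i with
    | zero =>
      rw [← getD_psums_zero hi]
      rcases Nat.lt_or_ge 1 s.length with h1 | h1
      · linarith [(hcond 0 h1).1]
      · rw [show s.length - 1 = 0 by omega] at hlast
        exact hlast.ge
    | succ j =>
      rw [← getD_psums_succ_sub_getD hi]
      exact (hcond j hi).2
  refine ⟨s.map fun x => (x + 1).toNat, ?_⟩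
  rw [lukaSteps, List.map_map]
  congr 1
  conv_rhs => rw [← List.map_id s]
  exact List.map_congr_left fun x hx => by
    simp [Int.toNat_of_nonneg (by linarith [hs x hx] : 0 ≤ x + 1)]

theorem OTree.luka_injective : Function.Injective OTree.luka := fun t t' h =>
  OTree.degSeq_injective <| lukaSteps_injective <| psums_injective <| by
    rwa [OTree.luka_eq_psums_lukaSteps, OTree.luka_eq_psums_lukaSteps] at h

theorem orderedTrees_equiv_lukasiewicz_general (n : ℕ) :
    (∀ t : OTree, t.size = n → IsLuka n t.luka) ∧
    (∀ l : List ℤ, IsLuka n l → ∃! t : OTree, t.size = n ∧ t.luka = l) := by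
  refine ⟨fun t ht => ?_, fun l hl => ?_⟩
  · rw [OTree.luka_eq_psums_lukaSteps, isLuka_psums_lukaSteps_iff, OTree.length_degSeq]
    exact ⟨ht, t.isLukaWord_degSeq⟩
  · obtain ⟨d, rfl⟩ := exists_psums_lukaSteps_eq hl
    obtain ⟨hlen, hd⟩ := isLuka_psums_lukaSteps_iff.1 hl
    obtain ⟨t, rfl⟩ := OTree.exists_degSeq_eq hd
    refine ⟨t, ⟨?_, t.luka_eq_psums_lukaSteps⟩, fun t' ht' => ?_⟩
    · rw [← OTree.length_degSeq, hlen]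
    · exact OTree.luka_injective (ht'.2.trans t.luka_eq_psums_lukaSteps.symm)

/-- The map sending an ordered rooted tree with `n` nodes to
the prefix-sum sequence `L[i] = ∑_{j=1}^{i} (deg(u_j) - 1)` of its pre-order
out-degrees is a bijection onto the set of Łukasiewicz paths of length `n`. -/
theorem orderedTrees_equiv_lukasiewicz (n : ℕ) (hn : 1 ≤ n) :
    (∀ t : OTree, t.size = n → IsLuka n t.luka) ∧
    (∀ l : List ℤ, IsLuka n l → ∃! t : OTree, t.size = n ∧ t.luka = l) :=
  orderedTrees_equiv_lukasiewicz_general n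
end
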